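/- arXiv:1307.4027 — 3 statements merged into one kernel-verified Lean document; each statement's English description precedes it below -/
import Mathlib

section
/- Let t < 0 and let z = x + iy be a complex number with y ≠ 0 and sin(ty) ≠ 0. Then g_t(z) is real if and only if x² + x = −y² − y·cot(ty). -/
/-- For `t < 0`, `g_t(z) := e^{-t(z + 1/2)} (1 + 1/z)` for `z ∈ ℂ \ {0}`. -/
noncomputable def gMap (t : ℝ) (z : ℂ) : ℂ :=
  Complex.exp (-(t : ℂ) * (z + 1 / 2)) * (1 + 1 / z)

/-- let `t < 0` and let `z = x + iy` with `y ≠ 0` and `sin(ty) ≠ 0`.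
Then `g_t(z)` is real iff `x² + x = −y² − y·cot(ty)`. -/
theorem gMap_real_iff_of_sin_ne_zero (t x y : ℝ) (ht : t < 0) (hy : y ≠ 0)
    (hsin : Real.sin (t * y) ≠ 0) :
    (gMap t ((x : ℂ) + y * Complex.I)).im = 0 ↔
      x ^ 2 + x = -y ^ 2 - y * Real.cot (t * y) := by
  have hN : (0:ℝ) < x^2 + y^2 := by positivity
  have hNe : (x^2 + y^2) ≠ 0 := hN.ne'
  unfold gMap
  simp only [Complex.mul_im, Complex.add_im, Complex.add_re, Complex.exp_im, Complex.exp_re,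
    Complex.div_im, Complex.div_re, Complex.normSq_apply, Complex.one_im, Complex.one_re,
    Complex.mul_re, Complex.I_re, Complex.I_im, Complex.ofReal_re, Complex.ofReal_im,
    Complex.neg_re, Complex.neg_im, Complex.re_ofNat, Complex.im_ofNat]
  rw [Real.cot_eq_cos_div_sin]
  ring_nf
  rw [Real.sin_neg, Real.cos_neg]
  have hE := (Real.exp_pos (t * (-1 / 2) - t * x)).ne'
  rw [show x * Real.exp (t * (-1 / 2) - t * x) * (x ^ 2 + y ^ 2)⁻¹ * -Real.sin (t*y) -
          y * Real.exp (t * (-1 / 2) - t * x) * Real.cos (t*y) * (x ^ 2 + y ^ 2)⁻¹ +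
        Real.exp (t * (-1 / 2) - t * x) * -Real.sin (t*y)
      = Real.exp (t * (-1 / 2) - t * x) *
          (-(((x + x^2 + y^2) * Real.sin (t*y) + y * Real.cos (t*y)) * (x ^ 2 + y ^ 2)⁻¹)) from by
        field_simp; ring]
  rw [mul_eq_zero]
  simp only [hE, false_or, neg_eq_zero, mul_eq_zero, inv_eq_zero, hNe, or_false]
  constructor
  · intro h
    rw [show y * Real.cos (t*y) = -((x + x^2 + y^2) * Real.sin (t*y)) by linarith, neg_mul,
      mul_assoc, mul_inv_cancel₀ hsin]
    ring
  · intro h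
    have h2 : y * Real.cos (t*y) = y * Real.cos (t*y) * (Real.sin (t*y))⁻¹ * Real.sin (t*y) := by
      rw [mul_assoc, inv_mul_cancel₀ hsin, mul_one]
    linear_combination (Real.sin (t*y)) * h + h2
end

section
/- Let t < 0, let y satisfy 0 < |y| ≤ y_t, and set x := x_t^+(y) or x := x_t^−(y), z := x + iy. Then x + y·cot(ty) = −(x² + y²), the value g_t(z) is real, g_t(z) = (y/sin(ty)) · e^{-t(x + 1/2)} / (y·cot(ty) + x), and g_t(z) > 0. -/
/-- For `t < 0`, `f_t(y) := 2y·sin(ty) + cos(ty)`. -/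
noncomputable def fMap (t y : ℝ) : ℝ :=
  2 * y * Real.sin (t * y) + Real.cos (t * y)

/-- `v_t(y) := √(1/4 − y² − y·cot(ty))` for `y ≠ 0` and `v_t(0) := √(1/4 − 1/t)`. -/
noncomputable def vMap (t y : ℝ) : ℝ :=
  if y = 0 then Real.sqrt (1 / 4 - 1 / t)
  else Real.sqrt (1 / 4 - y ^ 2 - y * Real.cot (t * y))

/-- `x_t^+(y) := −1/2 + v_t(y)`. -/
noncomputable def xPlus (t y : ℝ) : ℝ := -1 / 2 + vMap t y

/-- `x_t^−(y) := −1/2 − v_t(y)`. -/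
noncomputable def xMinus (t y : ℝ) : ℝ := -1 / 2 - vMap t y

private lemma fMap_cont (t : ℝ) : Continuous (fMap t) := by
  unfold fMap; fun_prop

private lemma fMap_zero (t : ℝ) : fMap t 0 = 1 := by simp [fMap]

/-- `y_t` is strictly less than `π/(-t)`. -/
private lemma yt_lt_pi_div (t yt : ℝ) (ht : t < 0)
    (hyt : IsLeast {y : ℝ | 0 < y ∧ fMap t y = -1} yt) : yt < Real.pi / (-t) := by
  have ht0 : t ≠ 0 := ne_of_lt ht
  have hbt : (0:ℝ) < -t := by linarith
  set b := Real.pi / (-t) with hbdef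
  have hb : 0 < b := div_pos Real.pi_pos hbt
  have hcont : ContinuousOn (fun y : ℝ => Real.cos (t*y/2) + 2*y*Real.sin (t*y/2))
      (Set.Icc 0 b) := by fun_prop
  have hga : Real.cos (t*(0:ℝ)/2) + 2*(0:ℝ)*Real.sin (t*(0:ℝ)/2) = 1 := by norm_num
  have htb : t * b / 2 = -(Real.pi/2) := by
    rw [hbdef]; field_simp
  have hgb : Real.cos (t*b/2) + 2*b*Real.sin (t*b/2) = -(2*b) := by
    rw [htb, Real.cos_neg, Real.sin_neg, Real.cos_pi_div_two, Real.sin_pi_div_two]; ring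
  have hmem : (0:ℝ) ∈ Set.Icc (Real.cos (t*b/2) + 2*b*Real.sin (t*b/2))
      (Real.cos (t*(0:ℝ)/2) + 2*(0:ℝ)*Real.sin (t*(0:ℝ)/2)) := by
    rw [hga, hgb]; constructor <;> linarith
  obtain ⟨y', hy'mem, hgy'⟩ := intermediate_value_Icc' hb.le hcont hmem
  have hgy' : Real.cos (t*y'/2) + 2*y'*Real.sin (t*y'/2) = 0 := hgy'
  have hy'0 : y' ≠ 0 := by
    intro h; rw [h] at hgy'; rw [hga] at hgy'; norm_num at hgy'
  have hy'b : y' ≠ b := by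
    intro h; rw [h, hgb] at hgy'; linarith
  have hy'pos : 0 < y' := lt_of_le_of_ne hy'mem.1 (Ne.symm hy'0)
  have hfy' : fMap t y' = -1 := by
    have hs := Real.sin_two_mul (t*y'/2)
    have hc := Real.cos_two_mul (t*y'/2)
    have h2 : (2:ℝ)*(t*y'/2) = t*y' := by ring
    rw [h2] at hs hc
    unfold fMap
    rw [hs, hc]
    linear_combination (2*Real.cos (t*y'/2)) * hgy'
  have := hyt.2 ⟨hy'pos, hfy'⟩
  have : y' < b := lt_of_le_of_ne hy'mem.2 hy'b
  linarith [hyt.2 ⟨hy'pos, hfy'⟩]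

/-- On `(0, y_t]`, `sin(ty) < 0`. -/
private lemma sin_neg_on (t yt : ℝ) (ht : t < 0)
    (hyt : IsLeast {y : ℝ | 0 < y ∧ fMap t y = -1} yt)
    {y : ℝ} (h0 : 0 < y) (hle : y ≤ yt) : Real.sin (t*y) < 0 := by
  have hbt : (0:ℝ) < -t := by linarith
  have hb := yt_lt_pi_div t yt ht hyt
  have hylt : y < Real.pi / (-t) := lt_of_le_of_lt hle hb
  have h1 : -(t*y) < Real.pi := by
    have := (lt_div_iff₀ hbt).mp hylt
    nlinarith
  have h2 : 0 < -(t*y) := by nlinarith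
  have := Real.sin_pos_of_pos_of_lt_pi h2 h1
  rw [Real.sin_neg] at this
  linarith

/-- On `(0, y_t]`, `f_t(y) ≥ -1`. -/
private lemma fMap_ge (t yt : ℝ) (ht : t < 0)
    (hyt : IsLeast {y : ℝ | 0 < y ∧ fMap t y = -1} yt)
    {y : ℝ} (h0 : 0 < y) (hle : y ≤ yt) : -1 ≤ fMap t y := by
  by_contra hcon
  push_neg at hcon
  have hmem : (-1:ℝ) ∈ Set.Icc (fMap t y) (fMap t 0) := by
    rw [fMap_zero]; exact ⟨hcon.le, by norm_num⟩
  obtain ⟨y', hy'mem, hfy'⟩ :=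
    intermediate_value_Icc' h0.le (fMap_cont t).continuousOn hmem
  have hy'0 : y' ≠ 0 := by
    intro h; rw [h, fMap_zero] at hfy'; norm_num at hfy'
  have hy'pos : 0 < y' := lt_of_le_of_ne hy'mem.1 (Ne.symm hy'0)
  have hyt' : yt ≤ y' := hyt.2 ⟨hy'pos, hfy'⟩
  have : y' = y := le_antisymm hy'mem.2 (by linarith)
  rw [this] at hfy'
  linarith

/-- On `(0, y_t]`, the radicand `1/4 - y² - y·cot(ty)` is nonnegative. -/
private lemma radicand_nonneg (t yt : ℝ) (ht : t < 0)
    (hyt : IsLeast {y : ℝ | 0 < y ∧ fMap t y = -1} yt)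
    {y : ℝ} (h0 : 0 < y) (hle : y ≤ yt) :
    0 ≤ 1/4 - y^2 - y * Real.cot (t*y) := by
  have hsin := sin_neg_on t yt ht hyt h0 hle
  have hs : Real.sin (t*y) ≠ 0 := ne_of_lt hsin
  have hcos := Real.cos_le_one (t*y)
  have hfle : fMap t y ≤ 1 := by
    unfold fMap; nlinarith
  have hfge := fMap_ge t yt ht hyt h0 hle
  have h1 : Real.cot (t*y) * Real.sin (t*y)^2 = Real.cos (t*y) * Real.sin (t*y) := by
    rw [Real.cot_eq_cos_div_sin]; field_simp
  have hp := Real.sin_sq_add_cos_sq (t*y)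
  have key : 4*(1/4 - y^2 - y*Real.cot (t*y))*Real.sin (t*y)^2 = 1 - (fMap t y)^2 := by
    unfold fMap
    linear_combination hp - 4*y*h1
  have hs2 : 0 < Real.sin (t*y)^2 := by positivity
  nlinarith [key]

/-- Core computation, given the sign facts. -/
private lemma core (t y x : ℝ) (hy : y ≠ 0)
    (hr : 0 ≤ 1 / 4 - y ^ 2 - y * Real.cot (t * y))
    (hs : Real.sin (t * y) ≠ 0)
    (hys : y / Real.sin (t * y) < 0)
    (hx : x = xPlus t y ∨ x = xMinus t y) :
    x + y * Real.cot (t * y) = -(x ^ 2 + y ^ 2) ∧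
    (gMap t ((x : ℂ) + y * Complex.I)).im = 0 ∧
    gMap t ((x : ℂ) + y * Complex.I) =
      ((y / Real.sin (t * y) * Real.exp (-t * (x + 1 / 2)) /
        (y * Real.cot (t * y) + x) : ℝ) : ℂ) ∧
    0 < (gMap t ((x : ℂ) + y * Complex.I)).re := by
  have hv2 : (vMap t y)^2 = 1 / 4 - y ^ 2 - y * Real.cot (t * y) := by
    rw [vMap, if_neg hy]; exact Real.sq_sqrt hr
  have hxx : x^2 + x + 1/4 = (vMap t y)^2 := by
    rcases hx with h | h
    · rw [h]; unfold xPlus; ring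
    · rw [h]; unfold xMinus; ring
  rw [hv2] at hxx
  have h1 : x + y * Real.cot (t * y) = -(x ^ 2 + y ^ 2) := by linarith
  have hsq : 0 < x^2 + y^2 := by positivity
  have hk : y * Real.cot (t * y) + x = -(x^2 + y^2) := by linarith
  have hKneg : y * Real.cot (t * y) + x < 0 := by linarith
  have hKne : y * Real.cot (t * y) + x ≠ 0 := ne_of_lt hKneg
  have hcot : Real.cot (t*y) = Real.cos (t*y) / Real.sin (t*y) :=
    Real.cot_eq_cos_div_sin _
  have h1' : Real.sin (t*y) * x + y * Real.cos (t*y)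
      = -(Real.sin (t*y) * (x^2 + y^2)) := by
    have e : Real.sin (t*y) * x + y * Real.cos (t*y)
        = Real.sin (t*y) * (x + y * Real.cot (t*y)) := by
      rw [hcot]; field_simp
    rw [e, h1]; ring
  have hz : (x:ℂ) + y * Complex.I ≠ 0 := by
    intro h
    have := congrArg Complex.im h
    simp at this
    exact hy this
  have hsC : (Real.sin (t*y) : ℂ) ≠ 0 := Complex.ofReal_ne_zero.mpr hs
  have hKC : ((y * Real.cot (t * y) + x : ℝ) : ℂ) ≠ 0 := Complex.ofReal_ne_zero.mpr hKne
  have H1C : (Real.sin (t*y) : ℂ) * x + (y:ℂ) * (Real.cos (t*y) : ℂ)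
      = -((Real.sin (t*y) : ℂ) * ((x:ℂ)^2 + (y:ℂ)^2)) := by exact_mod_cast h1'
  have H2C : (Real.sin (t*y) : ℂ)^2 + (Real.cos (t*y) : ℂ)^2 = 1 := by
    exact_mod_cast Real.sin_sq_add_cos_sq (t*y)
  have key0 : ((Real.cos (t*y) : ℂ) - (Real.sin (t*y) : ℂ) * Complex.I)
      * (((x:ℂ) + (y:ℂ) * Complex.I) + 1)
      * ((Real.sin (t*y) : ℂ) * (-((x:ℂ)^2 + (y:ℂ)^2)))
      = (y:ℂ) * ((x:ℂ) + (y:ℂ) * Complex.I) := by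
    linear_combination
      (-(((Real.cos (t*y) : ℂ) - (Real.sin (t*y) : ℂ) * Complex.I)
        * ((x:ℂ) + (y:ℂ) * Complex.I))) * H1C
      + ((x:ℂ) * (y:ℂ) + (y:ℂ)^2 * Complex.I) * H2C
      + (-(Real.sin (t*y) : ℂ) * (y:ℂ)
          * ((Real.sin (t*y) : ℂ) * (x:ℂ) + (y:ℂ) * (Real.cos (t*y) : ℂ))) * Complex.I_sq
  have HKC : ((y * Real.cot (t * y) + x : ℝ) : ℂ) = -((x:ℂ)^2 + (y:ℂ)^2) := by
    rw [hk]; push_cast; ring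
  have key : ((Real.cos (t*y) : ℂ) - (Real.sin (t*y) : ℂ) * Complex.I)
      * (1 + 1 / ((x:ℂ) + (y:ℂ) * Complex.I))
      = (y:ℂ) / ((Real.sin (t*y) : ℂ) * ((y * Real.cot (t * y) + x : ℝ) : ℂ)) := by
    have h1z : (1:ℂ) + 1 / ((x:ℂ) + (y:ℂ) * Complex.I)
        = (((x:ℂ) + (y:ℂ) * Complex.I) + 1) / ((x:ℂ) + (y:ℂ) * Complex.I) := by
      field_simp
    rw [h1z, ← mul_div_assoc, div_eq_div_iff hz (mul_ne_zero hsC hKC), HKC]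
    exact key0
  have hexp : Complex.exp (-(t:ℂ) * (((x:ℂ) + (y:ℂ) * Complex.I) + 1/2))
      = ((Real.exp (-t*(x+1/2)) : ℝ) : ℂ)
        * ((Real.cos (t*y) : ℂ) - (Real.sin (t*y) : ℂ) * Complex.I) := by
    have e1 : -(t:ℂ) * (((x:ℂ) + (y:ℂ) * Complex.I) + 1/2)
        = ((-t*(x+1/2) : ℝ) : ℂ) + ((-(t*y) : ℝ) : ℂ) * Complex.I := by
      push_cast; ring
    rw [e1, Complex.exp_add, Complex.exp_mul_I, ← Complex.ofReal_cos,
      ← Complex.ofReal_sin, ← Complex.ofReal_exp, Real.cos_neg, Real.sin_neg]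
    push_cast; ring
  have hgr : gMap t ((x : ℂ) + y * Complex.I) =
      ((y / Real.sin (t * y) * Real.exp (-t * (x + 1 / 2)) /
        (y * Real.cot (t * y) + x) : ℝ) : ℂ) := by
    unfold gMap
    rw [hexp, mul_assoc, key]
    push_cast
    field_simp
  refine ⟨h1, by rw [hgr]; exact Complex.ofReal_im _, hgr, ?_⟩
  rw [hgr, Complex.ofReal_re]
  have hE : 0 < Real.exp (-t*(x+1/2)) := Real.exp_pos _
  have : y / Real.sin (t * y) * Real.exp (-t * (x + 1 / 2)) < 0 :=
    mul_neg_of_neg_of_pos hys hE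
  exact div_pos_of_neg_of_neg this hKneg

/-- let `t < 0`, `0 < |y| ≤ y_t` (`y_t` the smallest positive zero of
`f_t + 1`), and `x = x_t^+(y)` or `x = x_t^−(y)`, `z = x + iy`. Then
`x + y·cot(ty) = −(x² + y²)`, `g_t(z)` is real,
`g_t(z) = (y/sin(ty)) · e^{-t(x + 1/2)} / (y·cot(ty) + x)`, and `g_t(z) > 0`. -/
theorem gMap_real_pos_on_curve (t y x yt : ℝ) (ht : t < 0)
    (hyt : IsLeast {y : ℝ | 0 < y ∧ fMap t y = -1} yt)
    (hy0 : 0 < |y|) (hyle : |y| ≤ yt)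
    (hx : x = xPlus t y ∨ x = xMinus t y) :
    x + y * Real.cot (t * y) = -(x ^ 2 + y ^ 2) ∧
    (gMap t ((x : ℂ) + y * Complex.I)).im = 0 ∧
    gMap t ((x : ℂ) + y * Complex.I) =
      ((y / Real.sin (t * y) * Real.exp (-t * (x + 1 / 2)) /
        (y * Real.cot (t * y) + x) : ℝ) : ℂ) ∧
    0 < (gMap t ((x : ℂ) + y * Complex.I)).re := by
  have hy : y ≠ 0 := by
    intro h; rw [h] at hy0; simp at hy0
  rcases hy.lt_or_gt with hneg | hpos
  · -- y < 0 : apply the positive-y lemmas to -y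
    have habs : |y| = -y := abs_of_neg hneg
    rw [habs] at hy0 hyle
    have hsin := sin_neg_on t yt ht hyt hy0 hyle
    have hrad := radicand_nonneg t yt ht hyt hy0 hyle
    have hts : t * -y = -(t*y) := by ring
    rw [hts, Real.sin_neg] at hsin
    have hcotneg : Real.cot (t * -y) = -Real.cot (t*y) := by
      rw [hts, Real.cot_eq_cos_div_sin, Real.cot_eq_cos_div_sin, Real.cos_neg,
        Real.sin_neg, div_neg]
    rw [hcotneg] at hrad
    have hr : 0 ≤ 1 / 4 - y ^ 2 - y * Real.cot (t * y) := by nlinarith [hrad]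
    have hspos : 0 < Real.sin (t*y) := by linarith
    exact core t y x hy hr (ne_of_gt hspos)
      (div_neg_of_neg_of_pos hneg hspos) hx
  · have habs : |y| = y := abs_of_pos hpos
    rw [habs] at hy0 hyle
    have hsin := sin_neg_on t yt ht hyt hy0 hyle
    have hrad := radicand_nonneg t yt ht hyt hy0 hyle
    exact core t y x hy hrad (ne_of_lt hsin)
      (div_neg_of_pos_of_neg hpos hsin) hx
end

section
/- Let t < 0. The function y ↦ g_t(x_t^−(y) + iy) is strictly increasing on (0, y_t), and the function y ↦ g_t(x_t^+(y) + iy) is strictly decreasing on (0, y_t). (Here both functions are real-valued on (0, y_t).) -/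
/-- `sin x / x` is strictly decreasing on `(0, π)`. -/
lemma final_step {e1 e2 A1 A2 N1 N2 : ℝ} (he : e1 < e2) (hA : A1 < A2) (hN : N2 < N1)
    (he1 : 0 < e1) (hA1 : 0 < A1) (hN2 : 0 < N2) : e1*A1*N2 < e2*A2*N1 := by
  have h1 : e1*A1 < e2*A2 := mul_lt_mul'' he hA he1.le hA1.le
  have h2 : e1*A1*N2 < e2*A2*N2 := mul_lt_mul_of_pos_right h1 hN2
  have h3 : e2*A2*N2 < e2*A2*N1 := mul_lt_mul_of_pos_left hN (mul_pos (lt_trans he1 he) (lt_trans hA1 hA))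
  linarith

lemma scale_lt {c a b : ℝ} (hc : 0 < c) (h : c * a < c * b) : a < b :=
  (mul_lt_mul_iff_right₀ hc).mp h

lemma sinc_strictAnti : StrictAntiOn (fun x : ℝ => Real.sin x / x) (Set.Ioo 0 Real.pi) := by
  apply strictAntiOn_of_deriv_neg (convex_Ioo 0 Real.pi)
  · exact ContinuousOn.div (Real.continuous_sin.continuousOn) continuousOn_id
      (fun x hx => ne_of_gt hx.1)
  · intro x hx
    rw [interior_Ioo] at hx
    have hx0 : (0:ℝ) < x := hx.1
    have hd : HasDerivAt (fun x : ℝ => Real.sin x / x)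
        ((Real.cos x * x - Real.sin x * 1) / x ^ 2) x :=
      (Real.hasDerivAt_sin x).div (hasDerivAt_id x) (ne_of_gt hx0)
    rw [hd.deriv]
    apply div_neg_of_neg_of_pos _ (by positivity)
    have hsin : 0 < Real.sin x := Real.sin_pos_of_pos_of_lt_pi hx0 hx.2
    rcases lt_or_ge x (Real.pi/2) with h2 | h2
    · have hcos : 0 < Real.cos x := Real.cos_pos_of_mem_Ioo ⟨by linarith [Real.pi_pos], h2⟩
      have := Real.lt_tan hx0 h2
      rw [Real.tan_eq_sin_div_cos, lt_div_iff₀ hcos] at this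
      nlinarith
    · have hcos : Real.cos x ≤ 0 :=
        Real.cos_nonpos_of_pi_div_two_le_of_le h2 (by linarith [Real.pi_pos, hx.2])
      nlinarith

lemma sin_core {a b : ℝ} (ha : 0 < a) (hab : a < b) (hapi : a < Real.pi)
    (hb : b < 2*Real.pi) : a * Real.sin b < b * Real.sin a := by
  have hsa : 0 < Real.sin a := Real.sin_pos_of_pos_of_lt_pi ha hapi
  rcases le_or_gt (Real.sin b) 0 with h | h
  · have : a * Real.sin b ≤ 0 := mul_nonpos_of_nonneg_of_nonpos ha.le h
    nlinarith
  · have hbpi : b < Real.pi := by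
      by_contra hc
      push_neg at hc
      have : Real.sin b ≤ 0 := by
        have hb' : Real.sin b = -Real.sin (b - Real.pi) := by
          rw [Real.sin_sub]; simp
        rw [hb']
        simp only [neg_nonpos]
        exact Real.sin_nonneg_of_nonneg_of_le_pi (by linarith) (by linarith)
      linarith
    have := sinc_strictAnti ⟨ha, hapi⟩ ⟨lt_trans ha hab, hbpi⟩ hab
    rw [div_lt_div_iff₀ (lt_trans ha hab) ha] at this
    linarith

lemma cot_core {a b : ℝ} (ha : 0 < a) (hab : a < b) (hb : b < Real.pi) :
    b * Real.cot b < a * Real.cot a := by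
  have hsa : 0 < Real.sin a := Real.sin_pos_of_pos_of_lt_pi ha (lt_trans hab hb)
  have hsb : 0 < Real.sin b := Real.sin_pos_of_pos_of_lt_pi (lt_trans ha hab) hb
  rw [Real.cot_eq_cos_div_sin, Real.cot_eq_cos_div_sin, ← mul_div_assoc, ← mul_div_assoc,
    div_lt_div_iff₀ hsb hsa]
  have hcore := sin_core (a := b - a) (b := b + a) (by linarith) (by linarith)
    (by linarith) (by linarith [Real.pi_pos])
  have e1 : Real.sin (b + a) = Real.sin b * Real.cos a + Real.cos b * Real.sin a :=
    Real.sin_add b a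
  have e2 : Real.sin (b - a) = Real.sin b * Real.cos a - Real.cos b * Real.sin a :=
    Real.sin_sub b a
  nlinarith [hcore, e1, e2]

lemma gMap_conj (t : ℝ) (z : ℂ) :
    gMap t ((starRingEnd ℂ) z) = (starRingEnd ℂ) (gMap t z) := by
  simp only [gMap, map_mul, map_add, map_one, map_div₀, ← Complex.exp_conj]
  norm_num [map_mul, map_add, map_neg, Complex.conj_ofReal, map_ofNat]

lemma gMap_prod (t : ℝ) {z w : ℂ} (hz : z ≠ 0) (hw : w ≠ 0) (hzw : z + w = -1) :
    gMap t z * gMap t w = 1 := by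
  have hw' : w = -1 - z := by linear_combination hzw
  have h1 : (1 + 1/z) * (1 + 1/w) = 1 := by
    subst hw'
    field_simp
    ring
  have h2 : Complex.exp (-(t:ℂ) * (z + 1/2)) * Complex.exp (-(t:ℂ) * (w + 1/2)) = 1 := by
    rw [← Complex.exp_add]
    have h0 : -(t:ℂ) * (z + 1/2) + -(t:ℂ) * (w + 1/2) = 0 := by
      linear_combination (-(t:ℂ)) * hzw
    rw [h0, Complex.exp_zero]
  calc gMap t z * gMap t w
      = (Complex.exp (-(t:ℂ) * (z + 1/2)) * Complex.exp (-(t:ℂ) * (w + 1/2))) *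
        ((1 + 1/z) * (1 + 1/w)) := by rw [gMap, gMap]; ring
    _ = 1 := by rw [h1, h2, mul_one]

lemma gMinus_val (t y : ℝ) (hy : 0 < y) (hs : Real.sin (t*y) < 0)
    (hv : (vMap t y) ^ 2 = 1/4 - y^2 - y * Real.cot (t*y)) :
    gMap t ((xMinus t y : ℂ) + y * Complex.I) =
      ((Real.exp (t * vMap t y) * y /
        (-Real.sin (t*y) * ((vMap t y + 1/2)^2 + y^2)) : ℝ) : ℂ) := by
  set v := vMap t y with hvdef
  have hsne : Real.sin (t*y) ≠ 0 := ne_of_lt hs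
  rw [Real.cot_eq_cos_div_sin] at hv
  have hv' : Real.sin (t*y) * (v^2 - 1/4 + y^2) = - (y * Real.cos (t*y)) := by
    rw [hv]
    field_simp
    ring
  set z : ℂ := (xMinus t y : ℂ) + y * Complex.I with hzdef
  have hzre : z.re = -1/2 - v := by simp [hzdef, xMinus, hvdef]
  have hzim : z.im = y := by simp [hzdef]
  have hnsq : Complex.normSq z = (v + 1/2)^2 + y^2 := by
    rw [Complex.normSq_apply, hzre, hzim]; ring
  have hN'ne : ((v + 1/2)^2 + y^2) ≠ 0 := by positivity
  have h1zre : (1/z).re = (-1/2 - v) / ((v + 1/2)^2 + y^2) := by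
    rw [one_div, Complex.inv_re, hzre, hnsq]
  have h1zim : (1/z).im = -y / ((v + 1/2)^2 + y^2) := by
    rw [one_div, Complex.inv_im, hzim, hnsq]
  have hw : (-(t:ℂ) * (z + 1/2)).re = t * v ∧ (-(t:ℂ) * (z + 1/2)).im = -(t*y) := by
    constructor <;> simp [Complex.mul_re, Complex.mul_im, hzre, hzim] <;> ring
  apply Complex.ext
  · rw [gMap, Complex.mul_re, Complex.exp_re, Complex.exp_im, hw.1, hw.2,
      Complex.add_re, Complex.one_re, h1zre, Complex.add_im, Complex.one_im, h1zim,
      Real.cos_neg, Real.sin_neg, Complex.ofReal_re]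
    field_simp
    linear_combination (4*Real.cos (t*y)) * hv' - (4*y) * Real.sin_sq_add_cos_sq (t*y)
  · rw [gMap, Complex.mul_im, Complex.exp_re, Complex.exp_im, hw.1, hw.2,
      Complex.add_re, Complex.one_re, h1zre, Complex.add_im, Complex.one_im, h1zim,
      Real.cos_neg, Real.sin_neg, Complex.ofReal_im]
    field_simp
    linear_combination (-4*Real.exp (t*v)) * hv'

/-- The (real) value of `gMap` along the minus curve. -/
noncomputable def rMinus (t y : ℝ) : ℝ :=
  Real.exp (t * vMap t y) * y / (-Real.sin (t*y) * ((vMap t y + 1/2)^2 + y^2))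

lemma rMinus_def (t y : ℝ) : rMinus t y =
    Real.exp (t * vMap t y) * y / (-Real.sin (t*y) * ((vMap t y + 1/2)^2 + y^2)) := rfl

lemma yt_le (t yt : ℝ) (ht : t < 0)
    (hyt : IsLeast {y : ℝ | 0 < y ∧ fMap t y = -1} yt) : yt ≤ Real.pi / (-t) := by
  apply hyt.2
  have hnt : (0:ℝ) < -t := by linarith
  constructor
  · exact div_pos Real.pi_pos hnt
  · have h : t * (Real.pi / (-t)) = -Real.pi := by field_simp [ne_of_lt ht]
    rw [fMap, h, Real.sin_neg, Real.sin_pi, Real.cos_neg, Real.cos_pi]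
    ring

lemma curve_facts (t yt y : ℝ) (ht : t < 0)
    (hyt : IsLeast {y : ℝ | 0 < y ∧ fMap t y = -1} yt) (hy : y ∈ Set.Ioo 0 yt) :
    Real.sin (t * y) < 0 ∧ (vMap t y) ^ 2 = 1/4 - y^2 - y * Real.cot (t * y) ∧
      0 < vMap t y := by
  obtain ⟨hy0, hyu⟩ := hy
  have hty0 : t * y < 0 := mul_neg_of_neg_of_pos ht hy0
  have htypi : -Real.pi < t * y := by
    have h1 : yt ≤ Real.pi / (-t) := yt_le t yt ht hyt
    have h2 : y < Real.pi / (-t) := lt_of_lt_of_le hyu h1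
    have h3 : (-t) * y < Real.pi := by
      rw [← lt_div_iff₀' (by linarith : (0:ℝ) < -t)]
      exact h2
    linarith
  have hsin : Real.sin (t * y) < 0 := Real.sin_neg_of_neg_of_neg_pi_lt hty0 htypi
  have hf : -1 < fMap t y := by
    by_contra hc
    push_neg at hc
    have hcont : ContinuousOn (fMap t) (Set.Icc 0 y) := by
      apply Continuous.continuousOn
      unfold fMap
      continuity
    have hmem : (-1 : ℝ) ∈ Set.Icc (fMap t y) (fMap t 0) := by
      constructor
      · exact hc
      · rw [fMap]; simp
    obtain ⟨c, hc1, hc2⟩ := intermediate_value_Icc' hy0.le hcont hmem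
    have hc0 : c ≠ 0 := by
      intro h
      rw [h, fMap] at hc2
      simp at hc2
      norm_num at hc2
    have : yt ≤ c := hyt.2 ⟨lt_of_le_of_ne hc1.1 (Ne.symm hc0), hc2⟩
    linarith [hc1.2]
  set S := Real.sin (t * y / 2) with hS
  set C := Real.cos (t * y / 2) with hC
  have hCpos : 0 < C :=
    Real.cos_pos_of_mem_Ioo ⟨by linarith [Real.pi_pos], by linarith [Real.pi_pos]⟩
  have hSneg : S < 0 := Real.sin_neg_of_neg_of_neg_pi_lt (by linarith) (by linarith)
  have hsin2 : Real.sin (t * y) = 2 * S * C := by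
    rw [hS, hC, ← Real.sin_two_mul]; congr 1; ring
  have hcos2 : Real.cos (t * y) = 1 - 2 * S ^ 2 := by
    have h2 : Real.cos (2 * (t*y/2)) = 2 * Real.cos (t*y/2) ^ 2 - 1 := Real.cos_two_mul _
    rw [show t*y = 2*(t*y/2) by ring, h2, hS]
    nlinarith [Real.sin_sq_add_cos_sq (t*y/2)]
  have hSC : S ^ 2 + C ^ 2 = 1 := Real.sin_sq_add_cos_sq _
  have hfac : 0 < C + 2 * y * S := by
    rw [fMap, hsin2, hcos2] at hf
    nlinarith
  have hsne : Real.sin (t * y) ≠ 0 := ne_of_lt hsin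
  have key : (1/4 - y^2 - y * (Real.cos (t*y) / Real.sin (t*y))) * Real.sin (t*y)
      = (C + 2*y*S) * (S - 2*y*C) / 2 := by
    rw [hcos2]
    rw [show Real.sin (t*y) = 2*S*C from hsin2]
    have hSne : S ≠ 0 := ne_of_lt hSneg
    have hCne : C ≠ 0 := ne_of_gt hCpos
    field_simp
    linear_combination (8 * y) * hSC
  have hR : (C + 2*y*S) * (S - 2*y*C) / 2 < 0 := by
    have h1 : S - 2*y*C < 0 := by nlinarith
    nlinarith [mul_pos_of_neg_of_neg (neg_neg_of_pos hfac) h1]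
  have hEpos : 0 < 1/4 - y^2 - y * Real.cot (t * y) := by
    rw [Real.cot_eq_cos_div_sin]
    have he : 1/4 - y^2 - y * (Real.cos (t*y) / Real.sin (t*y))
        = ((C + 2*y*S) * (S - 2*y*C) / 2) / Real.sin (t*y) := by
      rw [eq_div_iff hsne]; exact key
    rw [he]
    exact div_pos_iff.mpr (Or.inr ⟨hR, hsin⟩)
  refine ⟨hsin, ?_, ?_⟩
  · rw [vMap, if_neg (ne_of_gt hy0)]
    exact Real.sq_sqrt hEpos.le
  · rw [vMap, if_neg (ne_of_gt hy0)]
    exact Real.sqrt_pos.mpr hEpos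

/-- let `t < 0`. The (real-valued) function `y ↦ g_t(x_t^−(y) + iy)` is
strictly increasing on `(0, y_t)` and `y ↦ g_t(x_t^+(y) + iy)` is strictly decreasing
on `(0, y_t)`. -/
theorem gMap_along_curve_monotone (t yt : ℝ) (ht : t < 0)
    (hyt : IsLeast {y : ℝ | 0 < y ∧ fMap t y = -1} yt) :
    (∀ y ∈ Set.Ioo (0 : ℝ) yt,
      (gMap t ((xMinus t y : ℂ) + y * Complex.I)).im = 0 ∧
      (gMap t ((xPlus t y : ℂ) + y * Complex.I)).im = 0) ∧
    StrictMonoOn (fun y : ℝ => (gMap t ((xMinus t y : ℂ) + y * Complex.I)).re)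
      (Set.Ioo 0 yt) ∧
    StrictAntiOn (fun y : ℝ => (gMap t ((xPlus t y : ℂ) + y * Complex.I)).re)
      (Set.Ioo 0 yt) := by
  have hnt : (0:ℝ) < -t := by linarith
  -- basic facts for each point
  have hval : ∀ y ∈ Set.Ioo (0:ℝ) yt,
      gMap t ((xMinus t y : ℂ) + y * Complex.I) = ((rMinus t y : ℝ) : ℂ) ∧ 0 < rMinus t y := by
    intro y hy
    obtain ⟨hs, hv, hvpos⟩ := curve_facts t yt y ht hyt hy
    constructor
    · rw [rMinus_def]; exact gMinus_val t y hy.1 hs hv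
    · have h1 : 0 < -Real.sin (t*y) := by linarith
      have h2 : (0:ℝ) < (vMap t y + 1/2)^2 + y^2 := by positivity
      rw [rMinus_def]
      exact div_pos (mul_pos (Real.exp_pos _) hy.1) (mul_pos h1 h2)
  -- value on the plus curve is the inverse
  have hvalp : ∀ y ∈ Set.Ioo (0:ℝ) yt,
      gMap t ((xPlus t y : ℂ) + y * Complex.I) = (((rMinus t y)⁻¹ : ℝ) : ℂ) := by
    intro y hy
    obtain ⟨hgm, hRpos⟩ := hval y hy
    set zm : ℂ := (xMinus t y : ℂ) + y * Complex.I with hzm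
    set zp : ℂ := (xPlus t y : ℂ) + y * Complex.I with hzp
    have hconj : (starRingEnd ℂ) zp = -1 - zm := by
      rw [hzp, hzm]
      simp only [map_add, map_mul, Complex.conj_ofReal, Complex.conj_I, xPlus, xMinus]
      push_cast
      ring
    have hzm0 : zm ≠ 0 := by
      intro h
      have h1 := congrArg Complex.im h
      simp [hzm] at h1
      linarith [hy.1]
    have hw0 : (-1 - zm : ℂ) ≠ 0 := by
      intro h
      have h1 := congrArg Complex.im h
      simp [hzm] at h1
      linarith [hy.1]
    have hprod : gMap t zm * gMap t (-1 - zm) = 1 :=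
      gMap_prod t hzm0 hw0 (by ring)
    rw [← hconj, gMap_conj] at hprod
    rw [hgm] at hprod
    have hR0 : ((rMinus t y : ℝ) : ℂ) ≠ 0 := by
      simp only [ne_eq, Complex.ofReal_eq_zero]
      exact ne_of_gt hRpos
    have hc : (starRingEnd ℂ) (gMap t zp) = ((rMinus t y : ℝ) : ℂ)⁻¹ :=
      eq_inv_of_mul_eq_one_right hprod
    have : gMap t zp = (starRingEnd ℂ) (((rMinus t y : ℝ) : ℂ)⁻¹) := by
      rw [← hc, Complex.conj_conj]
    rw [this, ← Complex.ofReal_inv, Complex.conj_ofReal]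
  -- strict monotonicity of R
  have hRmono : ∀ y₁ ∈ Set.Ioo (0:ℝ) yt, ∀ y₂ ∈ Set.Ioo (0:ℝ) yt, y₁ < y₂ →
      rMinus t y₁ < rMinus t y₂ := by
    intro y₁ hy₁ y₂ hy₂ h12
    obtain ⟨hs₁, hv₁, hvpos₁⟩ := curve_facts t yt y₁ ht hyt hy₁
    obtain ⟨hs₂, hv₂, hvpos₂⟩ := curve_facts t yt y₂ ht hyt hy₂
    have hu₁ : 0 < -(t*y₁) := by nlinarith [mul_pos hnt hy₁.1]
    have hu₂ : 0 < -(t*y₂) := by nlinarith [mul_pos hnt hy₂.1]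
    have hupi₂ : -(t*y₂) < Real.pi := by
      have h1 : yt ≤ Real.pi / (-t) := yt_le t yt ht hyt
      have h2 : y₂ < Real.pi / (-t) := lt_of_lt_of_le hy₂.2 h1
      have := (lt_div_iff₀' hnt).mp h2
      linarith
    have huu : -(t*y₁) < -(t*y₂) := by nlinarith [mul_pos hnt (sub_pos.mpr h12)]
    have hupi₁ : -(t*y₁) < Real.pi := by linarith
    -- cot comparison : y₂ * cot(t y₂) ... need -y cot(ty) decreasing
    have hcot : y₂ * Real.cot (-(t*y₂)) < y₁ * Real.cot (-(t*y₁)) := by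
      have h := cot_core hu₁ huu hupi₂
      apply scale_lt hnt
      convert h using 1 <;> ring
    have hcotneg : ∀ y : ℝ, Real.cot (t*y) = -Real.cot (-(t*y)) := by
      intro y
      rw [Real.cot_eq_cos_div_sin, Real.cot_eq_cos_div_sin, Real.cos_neg, Real.sin_neg]
      ring
    -- E decreasing hence v decreasing
    have hE : 1/4 - y₂^2 - y₂ * Real.cot (t*y₂) < 1/4 - y₁^2 - y₁ * Real.cot (t*y₁) := by
      rw [hcotneg y₁, hcotneg y₂]
      have : y₁^2 < y₂^2 := by nlinarith [hy₁.1]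
      nlinarith [hcot]
    have hvlt : vMap t y₂ < vMap t y₁ := by
      have hE₂ : (0:ℝ) ≤ 1/4 - y₂^2 - y₂ * Real.cot (t*y₂) := by nlinarith [hv₂, sq_nonneg (vMap t y₂)]
      rw [vMap, if_neg (ne_of_gt hy₂.1), vMap, if_neg (ne_of_gt hy₁.1)]
      exact Real.sqrt_lt_sqrt hE₂ hE
    -- exp factor increasing
    have hexp : Real.exp (t * vMap t y₁) < Real.exp (t * vMap t y₂) := by
      apply Real.exp_lt_exp.mpr
      nlinarith [hvlt]
    -- A = y / (-sin(t y)) increasing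
    have hsinpos₁ : 0 < Real.sin (-(t*y₁)) := Real.sin_pos_of_pos_of_lt_pi hu₁ hupi₁
    have hsinpos₂ : 0 < Real.sin (-(t*y₂)) := Real.sin_pos_of_pos_of_lt_pi hu₂ hupi₂
    have hA : y₁ / (-Real.sin (t*y₁)) < y₂ / (-Real.sin (t*y₂)) := by
      rw [show -Real.sin (t*y₁) = Real.sin (-(t*y₁)) by rw [Real.sin_neg],
          show -Real.sin (t*y₂) = Real.sin (-(t*y₂)) by rw [Real.sin_neg],
          div_lt_div_iff₀ hsinpos₁ hsinpos₂]
      have h := sin_core hu₁ huu hupi₁ (by linarith [Real.pi_pos])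
      apply scale_lt hnt
      convert h using 1 <;> ring
    -- denominators N (in cot form)
    have hNeq : ∀ y : ℝ, (vMap t y)^2 = 1/4 - y^2 - y * Real.cot (t*y) →
        (vMap t y + 1/2)^2 + y^2 = 1/2 + vMap t y - y * Real.cot (t*y) := by
      intro y hv
      linear_combination hv
    have hN₁ := hNeq y₁ hv₁
    have hN₂ := hNeq y₂ hv₂
    have hNpos₁ : (0:ℝ) < (vMap t y₁ + 1/2)^2 + y₁^2 := by positivity
    have hNpos₂ : (0:ℝ) < (vMap t y₂ + 1/2)^2 + y₂^2 := by positivity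
    have hNlt : (vMap t y₂ + 1/2)^2 + y₂^2 < (vMap t y₁ + 1/2)^2 + y₁^2 := by
      rw [hN₁, hN₂, hcotneg y₁, hcotneg y₂]
      linarith [hcot, hvlt]
    -- assemble
    have hF₁ : rMinus t y₁ = Real.exp (t * vMap t y₁) * (y₁ / (-Real.sin (t*y₁))) /
        ((vMap t y₁ + 1/2)^2 + y₁^2) := by
      rw [rMinus_def]
      field_simp
    have hF₂ : rMinus t y₂ = Real.exp (t * vMap t y₂) * (y₂ / (-Real.sin (t*y₂))) /
        ((vMap t y₂ + 1/2)^2 + y₂^2) := by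
      rw [rMinus_def]
      field_simp
    rw [hF₁, hF₂, div_lt_div_iff₀ hNpos₁ hNpos₂]
    have hApos₁ : 0 < y₁ / (-Real.sin (t*y₁)) := by
      apply div_pos hy₁.1; linarith
    exact final_step hexp hA hNlt (Real.exp_pos _) hApos₁ hNpos₂
  refine ⟨?_, ?_, ?_⟩
  · intro y hy
    constructor
    · rw [(hval y hy).1]; simp
    · rw [hvalp y hy]; simp
  · intro y₁ hy₁ y₂ hy₂ h12
    simp only
    rw [(hval y₁ hy₁).1, (hval y₂ hy₂).1, Complex.ofReal_re, Complex.ofReal_re]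
    exact hRmono y₁ hy₁ y₂ hy₂ h12
  · intro y₁ hy₁ y₂ hy₂ h12
    simp only
    rw [hvalp y₁ hy₁, hvalp y₂ hy₂, Complex.ofReal_re, Complex.ofReal_re]
    have h1 := (hval y₁ hy₁).2
    have h2 := hRmono y₁ hy₁ y₂ hy₂ h12
    gcongr
end
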